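/- arXiv:1505.03314 — 5 statements merged into one kernel-verified Lean document; each statement's English description precedes it below -/
import Mathlib

section
/- The Ahmed integral evaluates as ∫₀¹ arctan(√(2 + x²)) / ((1 + x²)·√(2 + x²)) dx = 5π²/96. -/
/-!
For `t > 0`, `arctan t = π / 2 - arctan t⁻¹`, so the integral is `π / 2 * (π / 6) - K`, where
`π / 6 = ∫₀¹ dx / ((1 + x²) √(2 + x²))` (an antiderivative is `arctan (x / √(2 + x²))`) and
`K = ∫₀¹ arctan (√(2 + x²))⁻¹ / ((1 + x²) √(2 + x²)) dx`. The integrand of `K` is itself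
`∫₀¹ dy / ((1 + x²)(2 + x² + y²))`, and adding this kernel to its transpose gives
`1 / ((1 + x²)(1 + y²))`; integrating over the unit square yields `2 K = (π / 4)²`.
-/

open Real intervalIntegral Function

theorem integral_one_div_sq_add_sq {b : ℝ} (hb : b ≠ 0) (c d : ℝ) :
    ∫ x in c..d, 1 / (b ^ 2 + x ^ 2) = (arctan (d / b) - arctan (c / b)) / b := by
  have hderiv (x : ℝ) : HasDerivAt (fun x => arctan (x / b) / b) (1 / (b ^ 2 + x ^ 2)) x := by
    refine (((hasDerivAt_id x).div_const b).arctan.div_const b).congr_deriv ?_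
    simp only [id_eq]
    field_simp
  rw [integral_eq_sub_of_hasDerivAt (fun x _ => hderiv x)
    (Continuous.intervalIntegrable (by fun_prop (disch := intro x; positivity)) c d)]
  ring

theorem hasDerivAt_arctan_div_sqrt_two_add_sq (x : ℝ) :
    HasDerivAt (fun x => arctan (x / √(2 + x ^ 2))) (1 / ((1 + x ^ 2) * √(2 + x ^ 2))) x := by
  have hpos : 0 < 2 + x ^ 2 := by positivity
  have hsqrt : HasDerivAt (fun x => √(2 + x ^ 2)) (x / √(2 + x ^ 2)) x := by
    refine (((hasDerivAt_pow 2 x).const_add 2).sqrt hpos.ne').congr_deriv ?_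
    field_simp
    ring
  refine ((hasDerivAt_id x).div hsqrt (sqrt_pos.2 hpos).ne').arctan.congr_deriv ?_
  have hsq : √(2 + x ^ 2) ^ 2 = 2 + x ^ 2 := sq_sqrt hpos.le
  simp only [id_eq, Pi.div_apply]
  field_simp
  rw [hsq]
  ring

theorem integral_one_div_one_add_sq_mul_sqrt :
    ∫ x in (0 : ℝ)..1, 1 / ((1 + x ^ 2) * √(2 + x ^ 2)) = π / 6 := by
  rw [integral_eq_sub_of_hasDerivAt (fun x _ => hasDerivAt_arctan_div_sqrt_two_add_sq x)
    (Continuous.intervalIntegrable (by fun_prop (disch := intro x; positivity)) 0 1)]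
  norm_num

theorem intervalIntegral_integral_add_swap {F : ℝ → ℝ → ℝ} (hF : Continuous (uncurry F))
    (a b : ℝ) :
    ∫ x in a..b, ∫ y in a..b, (F x y + F y x) = 2 * ∫ x in a..b, ∫ y in a..b, F x y := by
  have hF' : Continuous (uncurry fun x y => F y x) := hF.comp continuous_swap
  have hint {G : ℝ → ℝ → ℝ} (hG : Continuous (uncurry G)) (x : ℝ) :
      IntervalIntegrable (G x) MeasureTheory.volume a b :=
    (hG.comp (Continuous.prodMk_right x)).intervalIntegrable a b
  have hswap : ∫ x in a..b, ∫ y in a..b, F y x = ∫ x in a..b, ∫ y in a..b, F x y :=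
    MeasureTheory.intervalIntegral_intervalIntegral_swap <|
      (hF'.continuousOn.integrableOn_compact (isCompact_uIcc.prod isCompact_uIcc)).mono_set
        (Set.prod_mono Set.uIoc_subset_uIcc Set.uIoc_subset_uIcc)
  simp_rw [integral_add (hint hF _) (hint hF' _)]
  rw [integral_add
    ((continuous_parametric_intervalIntegral_of_continuous' hF a b).intervalIntegrable a b)
    ((continuous_parametric_intervalIntegral_of_continuous' hF' a b).intervalIntegrable a b),
    hswap, two_mul]

noncomputable def ahmedKernel (x y : ℝ) : ℝ := 1 / ((1 + x ^ 2) * (2 + x ^ 2 + y ^ 2))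

theorem continuous_ahmedKernel : Continuous (uncurry ahmedKernel) := by
  unfold ahmedKernel
  fun_prop (disch := intro; positivity)

theorem ahmedKernel_add_swap (x y : ℝ) :
    ahmedKernel x y + ahmedKernel y x = 1 / (1 + x ^ 2) * (1 / (1 + y ^ 2)) := by
  unfold ahmedKernel
  field_simp
  ring

theorem integral_ahmedKernel (x : ℝ) :
    ∫ y in (0 : ℝ)..1, ahmedKernel x y
      = arctan (√(2 + x ^ 2))⁻¹ / ((1 + x ^ 2) * √(2 + x ^ 2)) := by
  have hpos : 0 < √(2 + x ^ 2) := sqrt_pos.2 (by positivity)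
  have hkernel (y : ℝ) :
      ahmedKernel x y = (1 + x ^ 2)⁻¹ * (1 / (√(2 + x ^ 2) ^ 2 + y ^ 2)) := by
    rw [ahmedKernel, sq_sqrt (by positivity)]
    field_simp
  simp_rw [hkernel, integral_const_mul, integral_one_div_sq_add_sq hpos.ne']
  rw [zero_div, arctan_zero, sub_zero, one_div, inv_mul_eq_div, div_div, mul_comm]

theorem integral_arctan_inv_sqrt :
    ∫ x in (0 : ℝ)..1, arctan (√(2 + x ^ 2))⁻¹ / ((1 + x ^ 2) * √(2 + x ^ 2)) = π ^ 2 / 32 := by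
  have hsym := intervalIntegral_integral_add_swap continuous_ahmedKernel 0 1
  simp only [ahmedKernel_add_swap, integral_const_mul, integral_mul_const,
    integral_one_div_one_add_sq, integral_ahmedKernel, arctan_one, arctan_zero] at hsym
  linarith

theorem ahmed_integral :
    ∫ x in (0:ℝ)..1,
      Real.arctan (Real.sqrt (2 + x ^ 2)) / ((1 + x ^ 2) * Real.sqrt (2 + x ^ 2))
      = 5 * Real.pi ^ 2 / 96 := by
  have hsplit (x : ℝ) : arctan √(2 + x ^ 2) / ((1 + x ^ 2) * √(2 + x ^ 2))
      = π / 2 * (1 / ((1 + x ^ 2) * √(2 + x ^ 2)))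
        - arctan (√(2 + x ^ 2))⁻¹ / ((1 + x ^ 2) * √(2 + x ^ 2)) := by
    rw [arctan_inv_of_pos (sqrt_pos.2 (by positivity))]
    ring
  simp_rw [hsplit]
  rw [integral_sub, integral_const_mul, integral_one_div_one_add_sq_mul_sqrt,
    integral_arctan_inv_sqrt]
  · ring
  all_goals exact Continuous.intervalIntegrable (by fun_prop (disch := intro x; positivity)) 0 1
end

section
/- Formula (F1): Let α > 0 and let f : ℝ² → ℝ be continuous on a set containing [0,α] × [0,α]. Then ∫₀^α ∫₀^α f(x,y) dx dy = ∫₀¹ (∫₀^α β·(f(β, β·x) + f(β·x, β)) dβ) dx. -/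
/-!
Split the square along the diagonal and apply Fubini in opposite orders on the two triangles:
both become `∫₀^α (∫₀^β ⋯ du) dβ`, with inner integrands `f β u` and `f u β`. The substitution
`u = β x` turns `∫₀^β g u du` into `∫₀¹ β g (β x) dx`, and Fubini on `[0,1] × [0,α]` swaps
the two outer integrals.
-/

open Real Set MeasureTheory

section Triangles

variable {E : Type*} [NormedAddCommGroup E] [NormedSpace ℝ E]

theorem integral_prod_self_eq_integral_Iic_add_Iio {μ : Measure ℝ} [SFinite μ] {F : ℝ × ℝ → E}
    (hF : Integrable F (μ.prod μ)) :
    ∫ p, F p ∂μ.prod μ = ∫ x, (∫ y in Iic x, F (x, y) ∂μ + ∫ y in Iio x, F (y, x) ∂μ) ∂μ := by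
  set T : Set (ℝ × ℝ) := {p | p.2 ≤ p.1}
  have hT : MeasurableSet T := measurableSet_le measurable_snd measurable_fst
  have hlower : ∀ x, (fun y => T.indicator F (x, y)) = (Iic x).indicator fun y => F (x, y) :=
    fun x => funext fun y => by simp [T, indicator_apply]
  have hupper : ∀ x, (fun y => Tᶜ.indicator F (y, x)) = (Iio x).indicator fun y => F (y, x) :=
    fun x => funext fun y => by simp [T, indicator_apply]
  rw [← integral_add_compl hT hF, ← integral_indicator hT, ← integral_indicator hT.compl,
    integral_prod _ (hF.indicator hT), integral_prod_symm _ (hF.indicator hT.compl),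
    ← integral_add (hF.indicator hT).integral_prod_left
      (hF.indicator hT.compl).integral_prod_right]
  simp only [hlower, hupper, integral_indicator measurableSet_Iic,
    integral_indicator measurableSet_Iio]

theorem setIntegral_Iic_restrict_Ioc {a b x : ℝ} (hax : a ≤ x) (hxb : x ≤ b) (g : ℝ → E) :
    ∫ y in Iic x, g y ∂volume.restrict (Ioc a b) = ∫ y in a..x, g y := by
  rw [Measure.restrict_restrict measurableSet_Iic, Iic_inter_Ioc_of_le hxb,
    intervalIntegral.integral_of_le hax]

theorem setIntegral_Iio_restrict_Ioc {a b x : ℝ} (hax : a ≤ x) (hxb : x ≤ b) (g : ℝ → E) :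
    ∫ y in Iio x, g y ∂volume.restrict (Ioc a b) = ∫ y in a..x, g y := by
  rw [setIntegral_congr_set Iio_ae_eq_Iic, setIntegral_Iic_restrict_Ioc hax hxb]

end Triangles

theorem intervalIntegral.integral_zero_one_mul_comp_mul (g : ℝ → ℝ) (c : ℝ) :
    ∫ t in (0 : ℝ)..1, c * g (c * t) = ∫ u in (0 : ℝ)..c, g u := by
  rw [intervalIntegral.integral_const_mul, intervalIntegral.mul_integral_comp_mul_left,
    mul_zero, mul_one]

theorem ContinuousOn.integrable_restrict_Ioc_prod {E : Type*} [NormedAddCommGroup E]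
    {G : ℝ × ℝ → E} {a b c d : ℝ} (hG : ContinuousOn G (Icc a b ×ˢ Icc c d)) :
    Integrable G ((volume.restrict (Ioc a b)).prod (volume.restrict (Ioc c d))) := by
  rw [Measure.prod_restrict, ← Measure.volume_eq_prod]
  exact (hG.integrableOn_compact (isCompact_Icc.prod isCompact_Icc)).mono_set
    (prod_mono Ioc_subset_Icc_self Ioc_subset_Icc_self)

theorem mul_mem_Icc_zero_of_mem_Icc {α β x : ℝ} (hβ : β ∈ Icc 0 α) (hx : x ∈ Icc 0 1) :
    β * x ∈ Icc 0 α :=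
  ⟨mul_nonneg hβ.1 hx.1, (mul_le_of_le_one_right hβ.1 hx.2).trans hβ.2⟩

theorem ContinuousOn.rescaled_add_swap {α : ℝ} {f : ℝ → ℝ → ℝ}
    (hf : ContinuousOn (fun p : ℝ × ℝ => f p.1 p.2) (Icc 0 α ×ˢ Icc 0 α)) :
    ContinuousOn (fun p : ℝ × ℝ => p.2 * (f p.2 (p.2 * p.1) + f (p.2 * p.1) p.2))
      (Icc 0 1 ×ˢ Icc 0 α) := by
  have h₁ : ContinuousOn (fun p : ℝ × ℝ => f p.2 (p.2 * p.1)) (Icc 0 1 ×ˢ Icc 0 α) :=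
    hf.comp (continuous_snd.prodMk (continuous_snd.mul continuous_fst)).continuousOn
      fun _ hp => ⟨hp.2, mul_mem_Icc_zero_of_mem_Icc hp.2 hp.1⟩
  have h₂ : ContinuousOn (fun p : ℝ × ℝ => f (p.2 * p.1) p.2) (Icc 0 1 ×ˢ Icc 0 α) :=
    hf.comp ((continuous_snd.mul continuous_fst).prodMk continuous_snd).continuousOn
      fun _ hp => ⟨mul_mem_Icc_zero_of_mem_Icc hp.2 hp.1, hp.2⟩
  exact continuousOn_snd.mul (h₁.add h₂)

theorem setIntegral_Iic_add_Iio_eq_integral_rescaled {α β : ℝ} {f : ℝ → ℝ → ℝ}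
    (hf : ContinuousOn (fun p : ℝ × ℝ => f p.1 p.2) (Icc 0 α ×ˢ Icc 0 α)) (hβ : β ∈ Ioc 0 α) :
    ∫ y in Iic β, f β y ∂volume.restrict (Ioc 0 α) +
        ∫ y in Iio β, f y β ∂volume.restrict (Ioc 0 α)
      = ∫ x in (0:ℝ)..1, β * (f β (β * x) + f (β * x) β) := by
  have hsub : uIcc 0 β ⊆ Icc 0 α := by
    rw [uIcc_of_le hβ.1.le]; exact Icc_subset_Icc_right hβ.2
  have h₁ : IntervalIntegrable (fun y => f β y) volume 0 β :=
    (hf.comp (continuous_const.prodMk continuous_id).continuousOn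
      fun _ hy => ⟨⟨hβ.1.le, hβ.2⟩, hsub hy⟩).intervalIntegrable
  have h₂ : IntervalIntegrable (fun y => f y β) volume 0 β :=
    (hf.comp (continuous_id.prodMk continuous_const).continuousOn
      fun _ hy => ⟨hsub hy, ⟨hβ.1.le, hβ.2⟩⟩).intervalIntegrable
  rw [setIntegral_Iic_restrict_Ioc hβ.1.le hβ.2, setIntegral_Iio_restrict_Ioc hβ.1.le hβ.2,
    ← intervalIntegral.integral_add h₁ h₂,
    intervalIntegral.integral_zero_one_mul_comp_mul (fun u => f β u + f u β)]

theorem formula_F1 (α : ℝ) (hα : 0 < α) (f : ℝ → ℝ → ℝ)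
    (hf : ContinuousOn (fun p : ℝ × ℝ => f p.1 p.2) (Set.Icc 0 α ×ˢ Set.Icc 0 α)) :
    ∫ y in (0:ℝ)..α, ∫ x in (0:ℝ)..α, f x y
      = ∫ x in (0:ℝ)..1, ∫ β in (0:ℝ)..α, β * (f β (β * x) + f (β * x) β) := by
  set μ := volume.restrict (Ioc 0 α)
  have hfμ : Integrable (fun p : ℝ × ℝ => f p.1 p.2) (μ.prod μ) :=
    hf.integrable_restrict_Ioc_prod
  calc ∫ y in (0:ℝ)..α, ∫ x in (0:ℝ)..α, f x y
      = ∫ p, f p.1 p.2 ∂μ.prod μ := by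
        simp only [intervalIntegral.integral_of_le hα.le]
        exact (integral_prod_symm _ hfμ).symm
    _ = ∫ β, (∫ y in Iic β, f β y ∂μ + ∫ y in Iio β, f y β ∂μ) ∂μ :=
        integral_prod_self_eq_integral_Iic_add_Iio hfμ
    _ = ∫ β, (∫ x in (0:ℝ)..1, β * (f β (β * x) + f (β * x) β)) ∂μ :=
        integral_congr_ae ((ae_restrict_mem measurableSet_Ioc).mono fun _ hβ =>
          setIntegral_Iic_add_Iio_eq_integral_rescaled hf hβ)
    _ = ∫ x in (0:ℝ)..1, ∫ β in (0:ℝ)..α, β * (f β (β * x) + f (β * x) β) := by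
        simp only [intervalIntegral.integral_of_le hα.le]
        refine (intervalIntegral_integral_swap ?_).symm
        rw [uIoc_of_le zero_le_one]
        exact hf.rescaled_add_swap.integrable_restrict_Ioc_prod
end

section
/- Formula (F2) for n = 3: Let α > 0 and let f : ℝ³ → ℝ be continuous on a set containing [0,α]³. Then ∫₀^α ∫₀^α ∫₀^α f(x₁,x₂,x₃) dx₁ dx₂ dx₃ = ∫₀¹ ∫₀¹ (∫₀^α β² · ( f(β, β·x₂, β·x₃) + f(β·x₁, β, β·x₃) + f(β·x₁, β·x₂, β) ) dβ) dx₁ dx₂ (where in each summand Φ_p the p-th argument equals β and the remaining arguments are β times the corresponding xᵢ). -/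
/-!
Split the cube `[0,α]³` according to which coordinate is the largest. Fubini on the two
triangles `u < v` and `v < u` of a square gives
`∫∫_{[a,b]²} F = ∫_a^b (∫_a^t F(t,v) dv + ∫_a^t F(u,t) du) dt`; applied twice, it writes the
cube integral as `∫_0^α` of the integrals over the three faces `{x_p = β}` of `[0,β]³`.
Substituting `x_i = β y_i`, `y_i ∈ [0,1]`, on a face produces the factor `β²`, and Fubini moves
the `dβ` integration inside. To have continuity everywhere, `f` is first composed with the
coordinatewise projection onto `[0,α]`.
-/

open Set MeasureTheory

variable {E : Type*} [NormedAddCommGroup E]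

theorem integrable_prod_restrict_Ioc_of_continuous {F : ℝ × ℝ → E} (hF : Continuous F)
    (a b c d : ℝ) :
    Integrable F ((volume.restrict (Ioc a b)).prod (volume.restrict (Ioc c d))) := by
  rw [Measure.prod_restrict]
  exact (hF.continuousOn.integrableOn_compact (isCompact_Icc.prod isCompact_Icc)).mono_set
    (prod_mono Ioc_subset_Icc_self Ioc_subset_Icc_self)

variable [NormedSpace ℝ E]

theorem intervalIntegral_add_of_continuous {f g : ℝ → E} (hf : Continuous f) (hg : Continuous g)
    (a b : ℝ) : ∫ x in a..b, (f x + g x) = (∫ x in a..b, f x) + ∫ x in a..b, g x :=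
  intervalIntegral.integral_add (hf.intervalIntegrable a b) (hg.intervalIntegrable a b)

theorem intervalIntegral_swap_of_continuous {F : ℝ → ℝ → E} (hF : Continuous (Function.uncurry F))
    {a b c d : ℝ} (hab : a ≤ b) (hcd : c ≤ d) :
    ∫ x in a..b, ∫ y in c..d, F x y = ∫ y in c..d, ∫ x in a..b, F x y := by
  simp only [intervalIntegral.integral_of_le hab, intervalIntegral.integral_of_le hcd]
  exact integral_integral_swap (integrable_prod_restrict_Ioc_of_continuous hF a b c d)

theorem intervalIntegral_swap_triangle_of_continuous {F : ℝ → ℝ → E}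
    (hF : Continuous (Function.uncurry F)) {a b : ℝ} (hab : a ≤ b) :
    ∫ x in a..b, ∫ y in x..b, F x y = ∫ y in a..b, ∫ x in a..y, F x y := by
  set μ := volume.restrict (Ioc a b)
  set W : ℝ → ℝ → E := fun x y => {p : ℝ × ℝ | p.1 < p.2}.indicator (Function.uncurry F) (x, y)
  have hW : Integrable (Function.uncurry W) (μ.prod μ) :=
    (integrable_prod_restrict_Ioc_of_continuous hF a b a b).indicator
      (measurableSet_lt measurable_fst measurable_snd)
  have h_row : ∀ x ∈ Ioc a b, ∫ y in x..b, F x y = ∫ y, W x y ∂μ := by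
    intro x hx
    have : (fun y => W x y) = (Ioi x).indicator (F x) := by
      ext y; simp [W, indicator_apply]
    rw [this, setIntegral_indicator measurableSet_Ioi, Ioc_inter_Ioi, sup_of_le_right hx.1.le,
      intervalIntegral.integral_of_le hx.2]
  have h_col : ∀ y ∈ Ioc a b, ∫ x in a..y, F x y = ∫ x, W x y ∂μ := by
    intro y hy
    have : (fun x => W x y) = (Iio y).indicator (F · y) := by
      ext x; simp [W, indicator_apply]
    rw [this, setIntegral_indicator measurableSet_Iio, intervalIntegral.integral_of_le hy.1.le,
      integral_Ioc_eq_integral_Ioo]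
    congr 2
    ext x
    simp only [mem_Ioo, mem_inter_iff, mem_Ioc, mem_Iio]
    grind
  calc ∫ x in a..b, ∫ y in x..b, F x y = ∫ x, ∫ y, W x y ∂μ ∂μ := by
        rw [intervalIntegral.integral_of_le hab]
        exact setIntegral_congr_fun measurableSet_Ioc h_row
    _ = ∫ y, ∫ x, W x y ∂μ ∂μ := integral_integral_swap hW
    _ = ∫ y in a..b, ∫ x in a..y, F x y := by
        rw [intervalIntegral.integral_of_le hab]
        exact (setIntegral_congr_fun measurableSet_Ioc h_col).symm

theorem intervalIntegral_square_eq_layers {F : ℝ → ℝ → E} (hF : Continuous (Function.uncurry F))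
    {a b : ℝ} (hab : a ≤ b) :
    ∫ u in a..b, ∫ v in a..b, F u v
      = ∫ t in a..b, ((∫ v in a..t, F t v) + ∫ u in a..t, F u t) := by
  have h_upper : Continuous fun u => ∫ v in u..b, F u v :=
    (by fun_prop : Continuous fun u => -∫ v in b..u, F u v).congr
      fun u => (intervalIntegral.integral_symm b u).symm
  calc ∫ u in a..b, ∫ v in a..b, F u v
      = ∫ u in a..b, ((∫ v in a..u, F u v) + ∫ v in u..b, F u v) :=
        intervalIntegral.integral_congr fun u _ =>
          (intervalIntegral.integral_add_adjacent_intervals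
            ((by fun_prop : Continuous (F u)).intervalIntegrable _ _)
            ((by fun_prop : Continuous (F u)).intervalIntegrable _ _)).symm
    _ = (∫ u in a..b, ∫ v in a..u, F u v) + ∫ v in a..b, ∫ u in a..v, F u v := by
        rw [intervalIntegral_add_of_continuous (by fun_prop) h_upper,
          intervalIntegral_swap_triangle_of_continuous hF hab]
    _ = ∫ t in a..b, ((∫ v in a..t, F t v) + ∫ u in a..t, F u t) :=
        (intervalIntegral_add_of_continuous (by fun_prop) (by fun_prop) a b).symm

theorem intervalIntegral_cube_eq_layers {g : ℝ → ℝ → ℝ → E}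
    (hg : Continuous fun p : ℝ × ℝ × ℝ => g p.1 p.2.1 p.2.2) {a b : ℝ} (hab : a ≤ b) :
    ∫ x₃ in a..b, ∫ x₂ in a..b, ∫ x₁ in a..b, g x₁ x₂ x₃
      = ∫ s in a..b, ((∫ x₃ in a..s, ∫ x₂ in a..s, g s x₂ x₃)
          + (∫ x₃ in a..s, ∫ x₁ in a..s, g x₁ s x₃) + ∫ x₂ in a..s, ∫ x₁ in a..s, g x₁ x₂ s) := by
  calc ∫ x₃ in a..b, ∫ x₂ in a..b, ∫ x₁ in a..b, g x₁ x₂ x₃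
      = ∫ x₃ in a..b, ∫ t in a..b, ((∫ x₁ in a..t, g x₁ t x₃) + ∫ x₂ in a..t, g t x₂ x₃) :=
        intervalIntegral.integral_congr fun x₃ _ =>
          intervalIntegral_square_eq_layers (F := fun x₂ x₁ => g x₁ x₂ x₃) (by fun_prop) hab
    _ = ∫ s in a..b, ((∫ t in a..s, ((∫ x₁ in a..t, g x₁ t s) + ∫ x₂ in a..t, g t x₂ s))
          + ∫ x₃ in a..s, ((∫ x₁ in a..s, g x₁ s x₃) + ∫ x₂ in a..s, g s x₂ x₃)) :=
        intervalIntegral_square_eq_layers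
          (F := fun x₃ t => (∫ x₁ in a..t, g x₁ t x₃) + ∫ x₂ in a..t, g t x₂ x₃) (by fun_prop) hab
    _ = _ := by
        refine intervalIntegral.integral_congr fun s hs => ?_
        rw [uIcc_of_le hab] at hs
        rw [← intervalIntegral_square_eq_layers (F := fun x₂ x₁ => g x₁ x₂ s) (by fun_prop) hs.1,
          intervalIntegral_add_of_continuous (by fun_prop) (by fun_prop)]
        abel

theorem intervalIntegral_rescale_of_continuous {k : ℝ → ℝ → E}
    (hk : Continuous (Function.uncurry k)) {α : ℝ} (hα : 0 ≤ α) :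
    ∫ x in (0:ℝ)..1, ∫ β in (0:ℝ)..α, β • k β (β * x)
      = ∫ β in (0:ℝ)..α, ∫ u in (0:ℝ)..β, k β u := by
  rw [intervalIntegral_swap_of_continuous (F := fun x β => β • k β (β * x)) (by fun_prop)
    zero_le_one hα]
  refine intervalIntegral.integral_congr fun β _ => ?_
  simp only [intervalIntegral.integral_smul, intervalIntegral.smul_integral_comp_mul_left,
    mul_zero, mul_one]

theorem intervalIntegral_pyramid_rescale {h : ℝ → ℝ → ℝ → E}
    (hh : Continuous fun p : ℝ × ℝ × ℝ => h p.1 p.2.1 p.2.2) {α : ℝ} (hα : 0 ≤ α) :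
    ∫ x in (0:ℝ)..1, ∫ y in (0:ℝ)..1, ∫ β in (0:ℝ)..α, β ^ 2 • h β (β * x) (β * y)
      = ∫ β in (0:ℝ)..α, ∫ v in (0:ℝ)..β, ∫ u in (0:ℝ)..β, h β u v := by
  calc ∫ x in (0:ℝ)..1, ∫ y in (0:ℝ)..1, ∫ β in (0:ℝ)..α, β ^ 2 • h β (β * x) (β * y)
      = ∫ x in (0:ℝ)..1, ∫ β in (0:ℝ)..α, β • ∫ v in (0:ℝ)..β, h β (β * x) v := by
        refine intervalIntegral.integral_congr fun x _ => ?_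
        simp only [pow_two, mul_smul]
        rw [intervalIntegral_rescale_of_continuous (k := fun β v => β • h β (β * x) v)
          (by fun_prop) hα]
        simp only [intervalIntegral.integral_smul]
    _ = ∫ β in (0:ℝ)..α, ∫ u in (0:ℝ)..β, ∫ v in (0:ℝ)..β, h β u v :=
        intervalIntegral_rescale_of_continuous (k := fun β u => ∫ v in (0:ℝ)..β, h β u v)
          (by fun_prop) hα
    _ = ∫ β in (0:ℝ)..α, ∫ v in (0:ℝ)..β, ∫ u in (0:ℝ)..β, h β u v := by
        refine intervalIntegral.integral_congr fun β hβ => ?_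
        rw [uIcc_of_le hα] at hβ
        exact intervalIntegral_swap_of_continuous (F := fun u v => h β u v) (by fun_prop) hβ.1 hβ.1

theorem intervalIntegral_cube_eq_sum_pyramids [CompleteSpace E] {g : ℝ → ℝ → ℝ → E}
    (hg : Continuous fun p : ℝ × ℝ × ℝ => g p.1 p.2.1 p.2.2) {α : ℝ} (hα : 0 ≤ α) :
    ∫ x₃ in (0:ℝ)..α, ∫ x₂ in (0:ℝ)..α, ∫ x₁ in (0:ℝ)..α, g x₁ x₂ x₃
      = ∫ x₁ in (0:ℝ)..1, ∫ x₂ in (0:ℝ)..1, ∫ x₃ in (0:ℝ)..1, ∫ β in (0:ℝ)..α,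
          β ^ 2 • (g β (β * x₂) (β * x₃) + g (β * x₁) β (β * x₃) + g (β * x₁) (β * x₂) β) := by
  -- Inside `simp`, `fun_prop` only proves continuity of parametric integrals if it may unfold
  -- the `Function.uncurry` it introduces.
  simp (disch := with_unfolding_all fun_prop) only [smul_add, intervalIntegral_add_of_continuous,
    intervalIntegral.integral_const, sub_zero, one_smul]
  rw [intervalIntegral_cube_eq_layers hg hα, intervalIntegral_pyramid_rescale hg hα,
    intervalIntegral_pyramid_rescale (h := fun β u v => g u β v) (by fun_prop) hα,
    intervalIntegral_pyramid_rescale (h := fun β u v => g u v β) (by fun_prop) hα]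
  simp (disch := with_unfolding_all fun_prop) only [intervalIntegral_add_of_continuous]

theorem exists_continuous_eqOn_cube {X : Type*} [TopologicalSpace X] {f : ℝ → ℝ → ℝ → X}
    {a b : ℝ} (hab : a ≤ b)
    (hf : ContinuousOn (fun p : ℝ × ℝ × ℝ => f p.1 p.2.1 p.2.2) (Icc a b ×ˢ Icc a b ×ˢ Icc a b)) :
    ∃ g : ℝ → ℝ → ℝ → X, Continuous (fun p : ℝ × ℝ × ℝ => g p.1 p.2.1 p.2.2) ∧
      ∀ x ∈ Icc a b, ∀ y ∈ Icc a b, ∀ z ∈ Icc a b, g x y z = f x y z := by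
  let c : ℝ → ℝ := fun x => projIcc a b hab x
  refine ⟨fun x y z => f (c x) (c y) (c z), ?_, fun x hx y hy z hz => ?_⟩
  · exact hf.comp_continuous (f := fun p : ℝ × ℝ × ℝ => (c p.1, c p.2.1, c p.2.2))
      (by fun_prop) fun p => ⟨Subtype.prop _, Subtype.prop _, Subtype.prop _⟩
  · simp [c, projIcc_of_mem hab hx, projIcc_of_mem hab hy, projIcc_of_mem hab hz]

theorem formula_F2_n3 (α : ℝ) (hα : 0 < α) (f : ℝ → ℝ → ℝ → ℝ)
    (hf : ContinuousOn (fun p : ℝ × ℝ × ℝ => f p.1 p.2.1 p.2.2)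
      (Set.Icc 0 α ×ˢ Set.Icc 0 α ×ˢ Set.Icc 0 α)) :
    ∫ x₃ in (0:ℝ)..α, ∫ x₂ in (0:ℝ)..α, ∫ x₁ in (0:ℝ)..α, f x₁ x₂ x₃
      = ∫ x₁ in (0:ℝ)..1, ∫ x₂ in (0:ℝ)..1, ∫ x₃ in (0:ℝ)..1, ∫ β in (0:ℝ)..α,
          β ^ 2 * (f β (β * x₂) (β * x₃) + f (β * x₁) β (β * x₃)
            + f (β * x₁) (β * x₂) β) := by
  obtain ⟨g, hg, hgf⟩ := exists_continuous_eqOn_cube hα.le hf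
  have h_mul : ∀ β ∈ uIcc 0 α, ∀ x ∈ uIcc (0:ℝ) 1, β * x ∈ Icc 0 α := by
    intro β hβ x hx
    rw [uIcc_of_le hα.le] at hβ
    rw [uIcc_of_le zero_le_one] at hx
    exact ⟨mul_nonneg hβ.1 hx.1, (mul_le_of_le_one_right hβ.1 hx.2).trans hβ.2⟩
  have h_Icc : ∀ β ∈ uIcc 0 α, β ∈ Icc 0 α := fun β hβ => by rwa [uIcc_of_le hα.le] at hβ
  open intervalIntegral in
  calc ∫ x₃ in (0:ℝ)..α, ∫ x₂ in (0:ℝ)..α, ∫ x₁ in (0:ℝ)..α, f x₁ x₂ x₃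
      = ∫ x₃ in (0:ℝ)..α, ∫ x₂ in (0:ℝ)..α, ∫ x₁ in (0:ℝ)..α, g x₁ x₂ x₃ :=
        integral_congr fun x₃ h₃ => integral_congr fun x₂ h₂ => integral_congr fun x₁ h₁ =>
          (hgf x₁ (h_Icc _ h₁) x₂ (h_Icc _ h₂) x₃ (h_Icc _ h₃)).symm
    _ = _ := intervalIntegral_cube_eq_sum_pyramids hg hα.le
    _ = _ := by
        refine integral_congr fun x₁ h₁ => integral_congr fun x₂ h₂ =>
          integral_congr fun x₃ h₃ => integral_congr fun β hb => ?_
        simp only [smul_eq_mul, hgf _ (h_Icc _ hb) _ (h_mul _ hb _ h₂) _ (h_mul _ hb _ h₃),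
          hgf _ (h_mul _ hb _ h₁) _ (h_Icc _ hb) _ (h_mul _ hb _ h₃),
          hgf _ (h_mul _ hb _ h₁) _ (h_mul _ hb _ h₂) _ (h_Icc _ hb)]
end

section
/- The fourth power of the Probability integral admits the representation (∫₀^∞ e^{-x²} dx)⁴ = 24 · ∫₀¹ ∫₀¹ ∫₀¹ (∫₀^∞ δ³ · γ² · β · e^{-δ²·(1 + γ² + γ²·β² + γ²·β²·x²)} dδ) dγ dβ dx, and this common value equals π²/16. -/
/-!
Integrating out δ (a Gamma integral), then γ and β (explicit antiderivatives built from arctan)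
reduces the right-hand side to `(1/4) ∫₀¹ (π/4 - arctan √(2+x²) / √(2+x²)) / (1+x²) dx`, i.e. to
Ahmed's integral `∫₀¹ arctan √(2+x²) / ((1+x²) √(2+x²)) dx = 5π²/96`. Writing
`arctan t = π/2 - arctan (1/t)` splits Ahmed's integral into `∫₀¹ dx / ((1+x²) √(2+x²)) = π/6` and
`K = ∫₀¹ ∫₀¹ dy dx / ((1+x²) (2+x²+y²))`. Since `(1+x²) + (1+y²) = 2+x²+y²`, adding `K` to its
reflection in the diagonal gives `∫₀¹ ∫₀¹ dy dx / ((1+x²) (1+y²)) = (π/4)²`, so `K = π²/32`.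
The left-hand side is `(√π/2)⁴ = π²/16` by the Gaussian integral.
-/

open Real Set MeasureTheory
open scoped Nat

theorem integral_Ioi_pow_odd_mul_exp_neg_mul_sq (n : ℕ) {b : ℝ} (hb : 0 < b) :
    ∫ x in Ioi (0:ℝ), x ^ (2 * n + 1) * exp (-b * x ^ 2) = n ! / (2 * b ^ (n + 1)) := by
  have h := integral_rpow_mul_exp_neg_mul_rpow (p := ((2 : ℕ) : ℝ)) (q := ((2 * n + 1 : ℕ) : ℝ))
    (by norm_num) (neg_one_lt_zero.trans_le (Nat.cast_nonneg _)) hb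
  have hq : (((2 * n + 1 : ℕ) : ℝ) + 1) / ((2 : ℕ) : ℝ) = n + 1 := by push_cast; ring
  simp only [rpow_natCast, neg_div, hq] at h
  rw [h, Gamma_nat_eq_factorial, ← Nat.cast_add_one, rpow_neg hb.le, rpow_natCast]
  push_cast
  field_simp

theorem integral_one_div_add_sq {w : ℝ} (hw : 0 < w) (a b : ℝ) :
    ∫ y in a..b, 1 / (w + y ^ 2) = (arctan (b / √w) - arctan (a / √w)) / √w := by
  have hs : 0 < √w := sqrt_pos.2 hw
  have h : ∀ y : ℝ, 1 / (w + y ^ 2) = w⁻¹ * (1 / (1 + (y / √w) ^ 2)) := fun y => by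
    rw [div_pow, sq_sqrt hw.le]; field_simp
  simp_rw [h, intervalIntegral.integral_const_mul,
    intervalIntegral.integral_comp_div (fun t => 1 / (1 + t ^ 2)) hs.ne',
    integral_one_div_one_add_sq, smul_eq_mul]
  field_simp
  rw [sq_sqrt hw.le]

theorem hasDerivAt_arctan_sub_div_one_add_sq (t : ℝ) :
    HasDerivAt (fun t => arctan t - t / (1 + t ^ 2)) (2 * (t ^ 2 / (1 + t ^ 2) ^ 2)) t := by
  have h1 : HasDerivAt (fun t : ℝ => 1 + t ^ 2) (2 * t) t := by
    simpa using (hasDerivAt_pow 2 t).const_add 1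
  refine ((hasDerivAt_arctan t).sub ((hasDerivAt_id' t).div h1 (by positivity))).congr_deriv ?_
  field_simp
  ring

theorem integral_sq_div_one_add_sq_sq (a b : ℝ) :
    ∫ t in a..b, t ^ 2 / (1 + t ^ 2) ^ 2
      = (arctan b - b / (1 + b ^ 2) - (arctan a - a / (1 + a ^ 2))) / 2 := by
  have h := intervalIntegral.integral_eq_sub_of_hasDerivAt
    (fun t _ => hasDerivAt_arctan_sub_div_one_add_sq t)
    (Continuous.intervalIntegrable (by fun_prop (disch := intros; positivity)) a b)
  rw [intervalIntegral.integral_const_mul] at h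
  linarith

theorem integral_sq_div_one_add_mul_sq_sq {c : ℝ} (hc : 0 < c) :
    ∫ γ in (0:ℝ)..1, γ ^ 2 / (1 + c * γ ^ 2) ^ 2 = (arctan √c / √c - 1 / (1 + c)) / (2 * c) := by
  have hs : 0 < √c := sqrt_pos.2 hc
  have h : ∀ γ : ℝ, γ ^ 2 / (1 + c * γ ^ 2) ^ 2 = c⁻¹ * ((√c * γ) ^ 2 / (1 + (√c * γ) ^ 2) ^ 2) :=
    fun γ => by rw [mul_pow, sq_sqrt hc.le]; field_simp
  simp_rw [h, intervalIntegral.integral_const_mul,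
    intervalIntegral.integral_comp_mul_left (fun t => t ^ 2 / (1 + t ^ 2) ^ 2) hs.ne',
    integral_sq_div_one_add_sq_sq, smul_eq_mul]
  simp only [mul_zero, mul_one, arctan_zero, zero_div, sub_self, sub_zero, sq_sqrt hc.le]
  field_simp

theorem hasDerivAt_arctan_sqrt_div_sqrt {u : ℝ} (hu : 0 < u) :
    HasDerivAt (fun u => arctan √u / √u) ((1 / (1 + u) - arctan √u / √u) / (2 * u)) u := by
  have hs : 0 < √u := sqrt_pos.2 hu
  have h := (hasDerivAt_sqrt hu.ne').arctan.div (hasDerivAt_sqrt hu.ne') hs.ne'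
  refine h.congr_deriv ?_
  rw [sq_sqrt hu.le]
  field_simp

theorem integral_mul_arctan_sqrt_one_add_mul_sq {k : ℝ} (hk : 0 < k) :
    ∫ β in (0:ℝ)..1, β * (arctan √(1 + k * β ^ 2) / √(1 + k * β ^ 2)
        - 1 / (1 + (1 + k * β ^ 2))) / (1 + k * β ^ 2)
      = (π / 4 - arctan √(1 + k) / √(1 + k)) / k := by
  have hderiv : ∀ β ∈ uIcc (0:ℝ) 1,
      HasDerivAt (fun β => -(arctan √(1 + k * β ^ 2) / √(1 + k * β ^ 2)) / k)
        (β * (arctan √(1 + k * β ^ 2) / √(1 + k * β ^ 2)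
          - 1 / (1 + (1 + k * β ^ 2))) / (1 + k * β ^ 2)) β := by
    intro β _
    have hu : 0 < 1 + k * β ^ 2 := by positivity
    have hin : HasDerivAt (fun β : ℝ => 1 + k * β ^ 2) (k * (2 * β)) β := by
      simpa using ((hasDerivAt_pow 2 β).const_mul k).const_add 1
    refine (((hasDerivAt_arctan_sqrt_div_sqrt hu).comp β hin).neg.div_const k).congr_deriv ?_
    field_simp
    ring
  rw [intervalIntegral.integral_eq_sub_of_hasDerivAt hderiv
    (Continuous.intervalIntegrable (by fun_prop (disch := intros; positivity)) 0 1)]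
  simp only [one_pow, mul_one, zero_pow two_ne_zero, mul_zero, add_zero, sqrt_one, arctan_one,
    div_one]
  ring

theorem integral_one_div_one_add_sq_mul_sqrt_two_add_sq :
    ∫ x in (0:ℝ)..1, 1 / ((1 + x ^ 2) * √(2 + x ^ 2)) = π / 6 := by
  have hderiv : ∀ x ∈ uIcc (0:ℝ) 1,
      HasDerivAt (fun x => arctan (x / √(2 + x ^ 2))) (1 / ((1 + x ^ 2) * √(2 + x ^ 2))) x := by
    intro x _
    have hw : 0 < 2 + x ^ 2 := by positivity
    have hs : 0 < √(2 + x ^ 2) := sqrt_pos.2 hw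
    have hin : HasDerivAt (fun x : ℝ => 2 + x ^ 2) (2 * x) x := by
      simpa using (hasDerivAt_pow 2 x).const_add 2
    refine ((hasDerivAt_id' x).div (hin.sqrt hw.ne') hs.ne').arctan.congr_deriv ?_
    simp only [Pi.div_apply]
    rw [div_pow, sq_sqrt hw.le]
    field_simp
    rw [sq_sqrt hw.le]
    ring
  rw [intervalIntegral.integral_eq_sub_of_hasDerivAt hderiv
    (Continuous.intervalIntegrable (by fun_prop (disch := intros; positivity)) 0 1)]
  have h3 : arctan (1 / √3) = π / 6 := by
    rw [← tan_pi_div_six, arctan_tan] <;> linarith [pi_pos]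
  norm_num [h3]

theorem intervalIntegral_intervalIntegral_symmetrize {f : ℝ → ℝ → ℝ}
    (hf : Continuous (Function.uncurry f)) (a b : ℝ) :
    ∫ x in a..b, ∫ y in a..b, f x y = (∫ x in a..b, ∫ y in a..b, (f x y + f y x)) / 2 := by
  have hf' : Continuous (Function.uncurry fun x y => f y x) := hf.comp continuous_swap
  have swap : ∫ x in a..b, ∫ y in a..b, f x y = ∫ x in a..b, ∫ y in a..b, f y x :=
    intervalIntegral_intervalIntegral_swap ((hf.continuousOn.integrableOn_compact
      (isCompact_uIcc.prod isCompact_uIcc)).mono_set (prod_mono uIoc_subset_uIcc uIoc_subset_uIcc))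
  have split : ∀ x : ℝ, ∫ y in a..b, (f x y + f y x)
      = (∫ y in a..b, f x y) + ∫ y in a..b, f y x := fun x =>
    intervalIntegral.integral_add ((hf.comp (.prodMk_right x)).intervalIntegrable a b)
      ((hf'.comp (.prodMk_right x)).intervalIntegrable a b)
  rw [intervalIntegral.integral_congr fun x _ => split x, intervalIntegral.integral_add
    (Continuous.intervalIntegrable (by fun_prop) a b)
    (Continuous.intervalIntegrable (by fun_prop) a b), ← swap]
  ring

theorem integral_arctan_inv_sqrt_two_add_sq_div :
    ∫ x in (0:ℝ)..1, arctan (1 / √(2 + x ^ 2)) / ((1 + x ^ 2) * √(2 + x ^ 2)) = π ^ 2 / 32 := by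
  set f : ℝ → ℝ → ℝ := fun x y => 1 / ((1 + x ^ 2) * (2 + x ^ 2 + y ^ 2)) with hf
  have inner : ∀ x : ℝ, ∫ y in (0:ℝ)..1, f x y
      = arctan (1 / √(2 + x ^ 2)) / ((1 + x ^ 2) * √(2 + x ^ 2)) := fun x => by
    have h : ∀ y, f x y = 1 / (1 + x ^ 2) * (1 / ((2 + x ^ 2) + y ^ 2)) := fun y => by
      rw [hf]; field_simp
    simp_rw [h, intervalIntegral.integral_const_mul,
      integral_one_div_add_sq (by positivity : (0:ℝ) < 2 + x ^ 2)]
    simp only [zero_div, arctan_zero, sub_zero]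
    field_simp
  have mirror_add : ∀ x y : ℝ, f x y + f y x = 1 / (1 + x ^ 2) * (1 / (1 + y ^ 2)) :=
    fun x y => by rw [hf]; field_simp; ring
  calc _ = ∫ x in (0:ℝ)..1, ∫ y in (0:ℝ)..1, f x y :=
        (intervalIntegral.integral_congr fun x _ => inner x).symm
    _ = (∫ x in (0:ℝ)..1, ∫ y in (0:ℝ)..1, (f x y + f y x)) / 2 :=
        intervalIntegral_intervalIntegral_symmetrize (by fun_prop (disch := intros; positivity)) 0 1
    _ = π ^ 2 / 32 := by
        simp_rw [mirror_add, intervalIntegral.integral_const_mul,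
          intervalIntegral.integral_mul_const, integral_one_div_one_add_sq, arctan_one, arctan_zero]
        ring

theorem integral_arctan_sqrt_two_add_sq_div :
    ∫ x in (0:ℝ)..1, arctan √(2 + x ^ 2) / ((1 + x ^ 2) * √(2 + x ^ 2)) = 5 * π ^ 2 / 96 := by
  have h : ∀ x : ℝ, arctan √(2 + x ^ 2) / ((1 + x ^ 2) * √(2 + x ^ 2))
      = π / 2 * (1 / ((1 + x ^ 2) * √(2 + x ^ 2)))
        - arctan (1 / √(2 + x ^ 2)) / ((1 + x ^ 2) * √(2 + x ^ 2)) := fun x => by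
    have h := arctan_inv_of_pos (sqrt_pos.2 (by positivity : (0:ℝ) < 2 + x ^ 2))
    rw [← one_div] at h
    rw [h]
    field_simp
    ring
  simp_rw [h]
  rw [intervalIntegral.integral_sub
      (Continuous.intervalIntegrable (by fun_prop (disch := intros; positivity)) 0 1)
      (Continuous.intervalIntegrable (by fun_prop (disch := intros; positivity)) 0 1),
    intervalIntegral.integral_const_mul, integral_one_div_one_add_sq_mul_sqrt_two_add_sq,
    integral_arctan_inv_sqrt_two_add_sq_div]
  ring

theorem integral_pi_div_four_sub_arctan_sqrt_two_add_sq_div :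
    ∫ x in (0:ℝ)..1, (π / 4 - arctan √(2 + x ^ 2) / √(2 + x ^ 2)) / (1 + x ^ 2) = π ^ 2 / 96 := by
  have h : ∀ x : ℝ, (π / 4 - arctan √(2 + x ^ 2) / √(2 + x ^ 2)) / (1 + x ^ 2)
      = π / 4 * (1 / (1 + x ^ 2)) - arctan √(2 + x ^ 2) / ((1 + x ^ 2) * √(2 + x ^ 2)) :=
    fun x => by rw [← div_div]; ring
  simp_rw [h]
  rw [intervalIntegral.integral_sub
      (Continuous.intervalIntegrable (by fun_prop (disch := intros; positivity)) 0 1)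
      (Continuous.intervalIntegrable (by fun_prop (disch := intros; positivity)) 0 1),
    intervalIntegral.integral_const_mul, integral_one_div_one_add_sq, arctan_one, arctan_zero,
    integral_arctan_sqrt_two_add_sq_div]
  ring

theorem inner_triple_integral_eq (x : ℝ) :
    ∫ β in (0:ℝ)..1, ∫ γ in (0:ℝ)..1, ∫ δ in Ioi (0:ℝ), δ ^ 3 * γ ^ 2 * β *
        exp (-δ ^ 2 * (1 + γ ^ 2 + γ ^ 2 * β ^ 2 + γ ^ 2 * β ^ 2 * x ^ 2))
      = (π / 4 - arctan √(2 + x ^ 2) / √(2 + x ^ 2)) / (1 + x ^ 2) / 4 := by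
  have hδ : ∀ β γ : ℝ, ∫ δ in Ioi (0:ℝ), δ ^ 3 * γ ^ 2 * β *
        exp (-δ ^ 2 * (1 + γ ^ 2 + γ ^ 2 * β ^ 2 + γ ^ 2 * β ^ 2 * x ^ 2))
      = β / 2 * (γ ^ 2 / (1 + (1 + (1 + x ^ 2) * β ^ 2) * γ ^ 2) ^ 2) := fun β γ => by
    have hb : 0 < 1 + (1 + (1 + x ^ 2) * β ^ 2) * γ ^ 2 := by positivity
    calc _ = ∫ δ in Ioi (0:ℝ), γ ^ 2 * β * (δ ^ (2 * 1 + 1)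
            * exp (-(1 + (1 + (1 + x ^ 2) * β ^ 2) * γ ^ 2) * δ ^ 2)) := by
          congr 1; ext δ; ring_nf
      _ = _ := by
          rw [integral_const_mul, integral_Ioi_pow_odd_mul_exp_neg_mul_sq 1 hb]
          simp only [Nat.factorial_one, Nat.cast_one]
          field_simp
  have hγ : ∀ β : ℝ, ∫ γ in (0:ℝ)..1, β / 2 * (γ ^ 2 / (1 + (1 + (1 + x ^ 2) * β ^ 2) * γ ^ 2) ^ 2)
      = β * (arctan √(1 + (1 + x ^ 2) * β ^ 2) / √(1 + (1 + x ^ 2) * β ^ 2)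
        - 1 / (1 + (1 + (1 + x ^ 2) * β ^ 2))) / (1 + (1 + x ^ 2) * β ^ 2) / 4 := fun β => by
    rw [intervalIntegral.integral_const_mul, integral_sq_div_one_add_mul_sq_sq (by positivity),
      ← div_div]
    ring
  simp_rw [hδ, hγ]
  rw [intervalIntegral.integral_div, integral_mul_arctan_sqrt_one_add_mul_sq (by positivity),
    show 1 + (1 + x ^ 2) = 2 + x ^ 2 by ring]

theorem probability_integral_fourth_power :
    (∫ x in Set.Ioi (0:ℝ), Real.exp (-x ^ 2)) ^ 4
      = 24 * ∫ x in (0:ℝ)..1, ∫ β in (0:ℝ)..1, ∫ γ in (0:ℝ)..1,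
          ∫ δ in Set.Ioi (0:ℝ),
            δ ^ 3 * γ ^ 2 * β *
              Real.exp (-δ ^ 2 * (1 + γ ^ 2 + γ ^ 2 * β ^ 2 + γ ^ 2 * β ^ 2 * x ^ 2))
    ∧ (∫ x in Set.Ioi (0:ℝ), Real.exp (-x ^ 2)) ^ 4 = Real.pi ^ 2 / 16 := by
  have gaussian : (∫ x in Ioi (0:ℝ), exp (-x ^ 2)) ^ 4 = π ^ 2 / 16 := by
    have h : ∫ x in Ioi (0:ℝ), exp (-x ^ 2) = √π / 2 := by simpa using integral_gaussian_Ioi 1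
    rw [h, div_pow, show √π ^ 4 = (√π ^ 2) ^ 2 by ring, sq_sqrt pi_pos.le]
    norm_num
  refine ⟨?_, gaussian⟩
  simp_rw [inner_triple_integral_eq]
  rw [intervalIntegral.integral_div, integral_pi_div_four_sub_arctan_sqrt_two_add_sq_div, gaussian]
  ring
end

section
/- For each x ∈ [0,1], the inner integration in γ gives ∫₀¹ 1 / ((1 + x²)(1 + γ²·(2 + x²))) dγ = arctan(√(2 + x²)) / ((1 + x²)·√(2 + x²)); consequently ∫₀¹ ∫₀¹ 1 / ((1 + x²)(1 + γ²·(2 + x²))) dγ dx = ∫₀¹ arctan(√(2 + x²)) / ((1 + x²)·√(2 + x²)) dx, i.e. the double integral equals Ahmed's integral. -/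
open Real Set

theorem integral_one_div_one_add_sq_mul {c : ℝ} (hc : 0 < c) (b : ℝ) :
    ∫ t in (0:ℝ)..b, 1 / (1 + t ^ 2 * c) = arctan (√c * b) / √c := by
  have hsc : 0 < √c := sqrt_pos.mpr hc
  have hrescale : ∀ t : ℝ, 1 / (1 + t ^ 2 * c) = 1 / (1 + (√c * t) ^ 2) := fun t => by
    rw [mul_pow, sq_sqrt hc.le, mul_comm c]
  simp_rw [hrescale]
  rw [intervalIntegral.integral_comp_mul_left (fun u => 1 / (1 + u ^ 2)) hsc.ne',
    integral_one_div_one_add_sq, mul_zero, arctan_zero, sub_zero, smul_eq_mul, inv_mul_eq_div]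

theorem integral_inner_gamma (x : ℝ) :
    ∫ γ in (0:ℝ)..1, 1 / ((1 + x ^ 2) * (1 + γ ^ 2 * (2 + x ^ 2)))
      = arctan (√(2 + x ^ 2)) / ((1 + x ^ 2) * √(2 + x ^ 2)) := by
  simp_rw [← one_div_mul_one_div]
  rw [intervalIntegral.integral_const_mul, integral_one_div_one_add_sq_mul (by positivity), mul_one,
    div_mul_div_comm, one_mul]

theorem inner_gamma_integral :
    (∀ x ∈ Set.Icc (0:ℝ) 1,
        ∫ γ in (0:ℝ)..1, 1 / ((1 + x ^ 2) * (1 + γ ^ 2 * (2 + x ^ 2)))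
          = Real.arctan (Real.sqrt (2 + x ^ 2)) / ((1 + x ^ 2) * Real.sqrt (2 + x ^ 2)))
    ∧ (∫ x in (0:ℝ)..1, ∫ γ in (0:ℝ)..1, 1 / ((1 + x ^ 2) * (1 + γ ^ 2 * (2 + x ^ 2))))
        = ∫ x in (0:ℝ)..1,
            Real.arctan (Real.sqrt (2 + x ^ 2)) / ((1 + x ^ 2) * Real.sqrt (2 + x ^ 2)) :=
  ⟨fun x _ => integral_inner_gamma x,
    intervalIntegral.integral_congr fun x _ => integral_inner_gamma x⟩
end
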